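/- arXiv:1807.06062 — 2 statements merged into one kernel-verified Lean document; each statement's English description precedes it below -/
import Mathlib

section
/- Let X = [[A, B], [Bᵀ, D]] be a symmetric real matrix satisfying Xᵀ I_{p,q} X = I_{p,q}, with A and D positive definite. Then the Schur complement of D in X equals A⁻¹, i.e., A - B D⁻¹ Bᵀ = A⁻¹. -/
/-!
Reading off the (1,1) and (2,1) blocks of `Xᵀ I_{p,q} X = I_{p,q}` gives `A² - BBᵀ = 1` and
`BᵀA = DBᵀ`. The second lets `D⁻¹` absorb `D` in `BD⁻¹BᵀA = BD⁻¹DBᵀ = BBᵀ`, so the first says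
exactly that `(A - BD⁻¹Bᵀ) A = 1`.
-/

open Matrix

namespace Matrix

variable {m n R : Type*} [Fintype m] [Fintype n] [DecidableEq m] [DecidableEq n] [CommRing R]

theorem blocks_of_transpose_mul_indefinite_mul_eq {A : Matrix m m R} {B : Matrix m n R}
    {D : Matrix n n R} (hA : Aᵀ = A) (hD : Dᵀ = D)
    (hX : (fromBlocks A B Bᵀ D)ᵀ * fromBlocks 1 0 0 (-1) * fromBlocks A B Bᵀ D =
      fromBlocks 1 0 0 (-1)) :
    A * A - B * Bᵀ = 1 ∧ Bᵀ * A = D * Bᵀ := by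
  rw [fromBlocks_transpose, hA, hD, transpose_transpose, fromBlocks_multiply,
    fromBlocks_multiply] at hX
  obtain ⟨h11, -, h21, -⟩ := fromBlocks_inj.mp hX
  simp only [Matrix.mul_one, Matrix.mul_zero, add_zero, zero_add, Matrix.mul_neg,
    Matrix.neg_mul] at h11 h21
  exact ⟨by rwa [← sub_eq_add_neg] at h11, by rwa [add_neg_eq_zero] at h21⟩

theorem sub_mul_inv_mul_eq_inv {A : Matrix m m R} {B : Matrix m n R} {C : Matrix n m R}
    {D : Matrix n n R} (hD : IsUnit D) (h₁ : A * A - B * C = 1) (h₂ : C * A = D * C) :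
    A - B * D⁻¹ * C = A⁻¹ := by
  have hBC : B * D⁻¹ * (C * A) = B * C := by
    rw [h₂, Matrix.mul_assoc, nonsing_inv_mul_cancel_left D C ((isUnit_iff_isUnit_det D).mp hD)]
  refine (inv_eq_left_inv ?_).symm
  rw [Matrix.sub_mul, Matrix.mul_assoc, hBC, h₁]

end Matrix

theorem stmt_3 {p q : ℕ}
    (A : Matrix (Fin p) (Fin p) ℝ) (B : Matrix (Fin p) (Fin q) ℝ)
    (D : Matrix (Fin q) (Fin q) ℝ) (hA : A.PosDef) (hD : D.PosDef)
    (hX : (fromBlocks A B Bᵀ D)ᵀ * fromBlocks 1 0 0 (-1) * fromBlocks A B Bᵀ D =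
      fromBlocks 1 0 0 (-1)) :
    A - B * D⁻¹ * Bᵀ = A⁻¹ := by
  obtain ⟨h₁, h₂⟩ :=
    blocks_of_transpose_mul_indefinite_mul_eq hA.isHermitian hD.isHermitian hX
  exact sub_mul_inv_mul_eq_inv hD.isUnit h₁ h₂
end

section
/- Let A, B, D be real n×n matrices with A positive definite, D positive definite, A² = I + BBᵀ, and D² = I + BᵀB. Then A²B = BD² implies AB = BD. -/
/-!
With `M = A B - B D`, the hypothesis says exactly that `M` solves the Sylvester equation
`A M + M D = 0`. Multiplying on the left by `Mᴴ` and taking traces gives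
`tr (Mᴴ A M) + tr (M D Mᴴ) = 0`, a sum of two nonnegative terms, so `Mᴴ A M = 0`,
and positive definiteness of `A` forces `M = 0`.
-/

open Matrix
open scoped ComplexOrder

namespace Matrix

variable {𝕜 : Type*} [RCLike 𝕜] {m n : Type*} [Fintype m] [Fintype n]

lemma PosDef.conjTranspose_mul_mul_same_eq_zero_iff {A : Matrix m m 𝕜} (hA : A.PosDef)
    {M : Matrix m n 𝕜} : Mᴴ * A * M = 0 ↔ M = 0 := by
  refine ⟨fun h ↦ ext_iff_mulVec.mpr fun v ↦ ?_, fun h ↦ by simp [h]⟩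
  rw [zero_mulVec]
  by_contra hv
  have hquad : star (M *ᵥ v) ⬝ᵥ (A *ᵥ (M *ᵥ v)) = star v ⬝ᵥ ((Mᴴ * A * M) *ᵥ v) := by
    rw [star_mulVec, dotProduct_mulVec, vecMul_vecMul, ← mulVec_mulVec, ← dotProduct_mulVec]
  have hpos := hA.dotProduct_mulVec_pos hv
  rw [hquad, h, zero_mulVec, dotProduct_zero] at hpos
  exact hpos.false

lemma PosDef.eq_zero_of_mul_add_mul_eq_zero {A : Matrix m m 𝕜} {D : Matrix n n 𝕜}
    {M : Matrix m n 𝕜} (hA : A.PosDef) (hD : D.PosSemidef) (hM : A * M + M * D = 0) :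
    M = 0 := by
  have htrace : (Mᴴ * A * M).trace + (M * D * Mᴴ).trace = 0 := by
    rw [trace_mul_cycle M, ← trace_add, Matrix.mul_assoc, Matrix.mul_assoc, ← Matrix.mul_add, hM,
      Matrix.mul_zero, trace_zero]
  have hAM := hA.posSemidef.conjTranspose_mul_mul_same M
  have hDM := hD.mul_mul_conjTranspose_same M
  rw [add_eq_zero_iff_of_nonneg hAM.trace_nonneg hDM.trace_nonneg, hAM.trace_eq_zero_iff] at htrace
  exact hA.conjTranspose_mul_mul_same_eq_zero_iff.mp htrace.1

end Matrix

theorem stmt_9_general {n : ℕ} (A B D : Matrix (Fin n) (Fin n) ℝ)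
    (hA : A.PosDef) (hD : D.PosDef)
    (h : A * A * B = B * (D * D)) :
    A * B = B * D := by
  have hsylvester : A * (A * B - B * D) + (A * B - B * D) * D = 0 :=
    calc _ = A * A * B - B * (D * D) := by noncomm_ring
      _ = 0 := sub_eq_zero.mpr h
  exact sub_eq_zero.mp (hA.eq_zero_of_mul_add_mul_eq_zero hD.posSemidef hsylvester)

theorem stmt_9 {n : ℕ} (A B D : Matrix (Fin n) (Fin n) ℝ)
    (hA : A.PosDef) (hD : D.PosDef)
    (hA2 : A * A = 1 + B * Bᵀ) (hD2 : D * D = 1 + Bᵀ * B)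
    (h : A * A * B = B * (D * D)) :
    A * B = B * D :=
  stmt_9_general A B D hA hD h
end
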